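/- Let n ≥ 1 and let Φ ⊆ D_n = {±e_i ± e_j : i ≠ j} be a root subsystem. Then there exist a sign function ε : {1,…,n} → {1,−1}, a partition P of {1,…,n}, and a type assignment t from P to {A, D}, such that D_ε(Φ) = ⋃_{B∈P} Φ_{t(B)}(B), where D_ε is the linear automorphism of ℝ^n with D_ε(e_i) = ε(i)·e_i. -/

import Mathlib

open Finset

noncomputable section

/-- Standard basis vector `e i` of `ℝ^n`. -/
def E {n : ℕ} (i : Fin n) : Fin n → ℝ := Pi.single i 1

/-- Standard inner product on `ℝ^n`. -/
def dot {n : ℕ} (v w : Fin n → ℝ) : ℝ := ∑ i, v i * w i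

/-- Reflection across the hyperplane orthogonal to `α`. -/
def reflRoot {n : ℕ} (α v : Fin n → ℝ) : Fin n → ℝ := v - (2 * dot v α / dot α α) • α

/-- The root system `A_{n-1}`. -/
def Aset (n : ℕ) : Set (Fin n → ℝ) := {α | ∃ i j : Fin n, i ≠ j ∧ α = E i - E j}

/-- The root system `D_n`. -/
def Dset (n : ℕ) : Set (Fin n → ℝ) :=
  {α | ∃ i j : Fin n, i ≠ j ∧ (α = E i - E j ∨ α = E i + E j ∨ α = -(E i + E j))}

/-- The root system `B_n`. -/
def Bset (n : ℕ) : Set (Fin n → ℝ) := Dset n ∪ {α | ∃ i : Fin n, α = E i ∨ α = -E i}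

/-- The root system `C_n`. -/
def Cset (n : ℕ) : Set (Fin n → ℝ) :=
  Dset n ∪ {α | ∃ i : Fin n, α = (2:ℝ) • E i ∨ α = -((2:ℝ) • E i)}

/-- The nonreduced root system `BC_n`. -/
def BCset (n : ℕ) : Set (Fin n → ℝ) := Bset n ∪ Cset n

/-- Types of classical irreducible root (sub)systems. -/
inductive RType | A | D | B | C | BC
deriving DecidableEq

/-- Type-`A` system on a block `B`. -/
def PhiA {n : ℕ} (B : Finset (Fin n)) : Set (Fin n → ℝ) :=
  {α | ∃ i ∈ B, ∃ j ∈ B, i ≠ j ∧ α = E i - E j}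

/-- Type-`D` system on a block `B`. -/
def PhiD {n : ℕ} (B : Finset (Fin n)) : Set (Fin n → ℝ) :=
  {α | ∃ i ∈ B, ∃ j ∈ B, i ≠ j ∧ (α = E i - E j ∨ α = E i + E j ∨ α = -(E i + E j))}

/-- Type-`B` system on a block `B`. -/
def PhiB {n : ℕ} (B : Finset (Fin n)) : Set (Fin n → ℝ) :=
  PhiD B ∪ {α | ∃ i ∈ B, α = E i ∨ α = -E i}

/-- Type-`C` system on a block `B`. -/
def PhiC {n : ℕ} (B : Finset (Fin n)) : Set (Fin n → ℝ) :=
  PhiD B ∪ {α | ∃ i ∈ B, α = (2:ℝ) • E i ∨ α = -((2:ℝ) • E i)}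

/-- Type-`BC` system on a block `B`. -/
def PhiBC {n : ℕ} (B : Finset (Fin n)) : Set (Fin n → ℝ) := PhiB B ∪ PhiC B

/-- The classical system of the given type on a block. -/
def PhiOf {n : ℕ} : RType → Finset (Fin n) → Set (Fin n → ℝ)
  | RType.A => PhiA
  | RType.D => PhiD
  | RType.B => PhiB
  | RType.C => PhiC
  | RType.BC => PhiBC

/-!
Call coordinates `i ≠ j` linked when `Φ` contains a root `±e_i ± e_j`. The reflection in
`e_i + s e_j` sends `e_j + t e_k` to `-s e_i + t e_k`, so linking is an equivalence relation;
its classes are the blocks. If some pair of a block carries both `e_p + e_q` and `e_p - e_q`,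
the same reflections spread this to every pair of the block, which is then of type `D`.
Otherwise each linked pair carries a single root `e_x - c(x,y) e_y` up to sign, and
`c(x,z) = c(x,y) c(y,z)`; fixing `r` in the block, `ε x := c(r,x)` gives `ε x ε y = c(x,y)`,
so that `D_ε` maps the roots of the block onto those of type `A`.
-/

namespace RootD

variable {n : ℕ}

def IsSign (a : ℝ) : Prop := a = 1 ∨ a = -1

namespace IsSign

variable {a b : ℝ}

lemma one : IsSign 1 := Or.inl rfl

lemma neg_one : IsSign (-1) := Or.inr rfl

lemma neg (ha : IsSign a) : IsSign (-a) := by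
  rcases ha with rfl | rfl <;> simp [IsSign]

lemma mul (ha : IsSign a) (hb : IsSign b) : IsSign (a * b) := by
  rcases ha with rfl | rfl
  · simpa using hb
  · simpa using hb.neg

lemma mul_self (ha : IsSign a) : a * a = 1 := by
  rcases ha with rfl | rfl <;> norm_num

end IsSign

section Coordinates

variable {i j : Fin n}

lemma E_apply_self (i : Fin n) : E i i = 1 := Pi.single_eq_same i 1

lemma E_apply_of_ne (h : j ≠ i) : E i j = 0 := Pi.single_eq_of_ne h 1

lemma mul_E (ε : Fin n → ℝ) (i : Fin n) : ε * E i = ε i • E i := by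
  rw [E, ← Pi.single_mul_right, mul_one, ← Pi.single_smul, smul_eq_mul, mul_one]

lemma mul_smul_E_add_smul_E (ε : Fin n → ℝ) (a : ℝ) (i : Fin n) (b : ℝ) (j : Fin n) :
    ε * (a • E i + b • E j) = (ε i * a) • E i + (ε j * b) • E j := by
  rw [mul_add, mul_smul_comm, mul_smul_comm, mul_E, mul_E, smul_smul, smul_smul, mul_comm a,
    mul_comm b]

lemma dot_E_add_smul_E (v : Fin n → ℝ) (i : Fin n) (s : ℝ) (j : Fin n) :
    dot v (E i + s • E j) = v i + s * v j := by
  change v ⬝ᵥ (Pi.single i 1 + s • Pi.single j 1) = _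
  rw [dotProduct_add, dotProduct_smul, dotProduct_single, dotProduct_single, smul_eq_mul]
  ring

lemma E_add_smul_E_ne_zero (hij : i ≠ j) (s : ℝ) : E i + s • E j ≠ 0 := fun h => by
  simpa [E_apply_self, E_apply_of_ne hij] using congr_fun h i

lemma smul_E_add_smul_E {a : ℝ} (ha : IsSign a) (b : ℝ) (i j : Fin n) :
    a • E i + b • E j = a • (E i + (a * b) • E j) := by
  rw [smul_add, smul_smul, ← mul_assoc, ha.mul_self, one_mul]

lemma reflRoot_E_add_smul_E {s : ℝ} (hs : IsSign s) (hij : i ≠ j) (v : Fin n → ℝ) :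
    reflRoot (E i + s • E j) v = v - (v i + s * v j) • (E i + s • E j) := by
  have hnorm : dot (E i + s • E j) (E i + s • E j) = 2 := by
    rw [dot_E_add_smul_E]
    norm_num [E_apply_self, E_apply_of_ne hij, E_apply_of_ne hij.symm, hs.mul_self]
  rw [reflRoot, hnorm, dot_E_add_smul_E]
  congr 2
  ring

end Coordinates

section ClassicalSystems

variable {B : Finset (Fin n)} {α : Fin n → ℝ}

lemma mem_PhiD_iff : α ∈ PhiD B ↔ ∃ i ∈ B, ∃ j ∈ B, i ≠ j ∧
    ∃ a b : ℝ, IsSign a ∧ IsSign b ∧ α = a • E i + b • E j := by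
  constructor
  · rintro ⟨i, hi, j, hj, hij, rfl | rfl | rfl⟩
    · exact ⟨i, hi, j, hj, hij, 1, -1, .one, .neg_one, by simp [sub_eq_add_neg]⟩
    · exact ⟨i, hi, j, hj, hij, 1, 1, .one, .one, by simp⟩
    · exact ⟨i, hi, j, hj, hij, -1, -1, .neg_one, .neg_one, by module⟩
  · rintro ⟨i, hi, j, hj, hij, a, b, ha | ha, hb | hb, rfl⟩ <;> subst ha hb
    · exact ⟨i, hi, j, hj, hij, .inr (.inl (by simp))⟩
    · exact ⟨i, hi, j, hj, hij, .inl (by simp [sub_eq_add_neg])⟩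
    · exact ⟨j, hj, i, hi, hij.symm, .inl (by simp [sub_eq_add_neg, add_comm])⟩
    · exact ⟨i, hi, j, hj, hij, .inr (.inr (by module))⟩

lemma mem_Dset_iff : α ∈ Dset n ↔ ∃ i j : Fin n, i ≠ j ∧
    ∃ a b : ℝ, IsSign a ∧ IsSign b ∧ α = a • E i + b • E j := by
  have hD : Dset n = PhiD (univ : Finset (Fin n)) := by ext; simp [Dset, PhiD]
  simp [hD, mem_PhiD_iff]

lemma E_add_E_not_mem_Dset (i : Fin n) : E i + E i ∉ Dset n := fun h => by
  obtain ⟨j, k, hjk, a, b, ha, -, h⟩ := mem_Dset_iff.1 h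
  have hj := congr_fun h j
  simp only [Pi.add_apply, Pi.smul_apply, smul_eq_mul, E_apply_self, E_apply_of_ne hjk,
    mul_zero, mul_one, add_zero] at hj
  by_cases hij : j = i
  · subst hij
    rcases ha with rfl | rfl <;> norm_num [E_apply_self] at hj
  · rcases ha with rfl | rfl <;> norm_num [E_apply_of_ne hij] at hj

lemma smul_E_add_smul_E_mem_PhiA {i j : Fin n} (hi : i ∈ B) (hj : j ∈ B) (hij : i ≠ j)
    {a b : ℝ} (ha : IsSign a) (hb : IsSign b) (hab : a * b = -1) : a • E i + b • E j ∈ PhiA B := by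
  rcases ha with rfl | rfl <;> rcases hb with rfl | rfl <;> norm_num at hab
  · exact ⟨i, hi, j, hj, hij, by simp [sub_eq_add_neg]⟩
  · exact ⟨j, hj, i, hi, hij.symm, by simp [sub_eq_add_neg, add_comm]⟩

end ClassicalSystems

lemma reflRoot_self {α : Fin n → ℝ} (h : α ≠ 0) : reflRoot α α = -α := by
  have hα : dot α α ≠ 0 := fun h0 => h (dotProduct_self_eq_zero.1 h0)
  rw [reflRoot, mul_div_assoc, div_self hα, mul_one, two_smul]
  abel

def IsReflClosed (Φ : Set (Fin n → ℝ)) : Prop := ∀ α ∈ Φ, ∀ β ∈ Φ, reflRoot α β ∈ Φ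

namespace IsReflClosed

variable {Φ : Set (Fin n → ℝ)} {i j k : Fin n} {s t : ℝ}

lemma neg_mem (hΦ : IsReflClosed Φ) {α : Fin n → ℝ} (hα : α ∈ Φ) (h0 : α ≠ 0) : -α ∈ Φ :=
  reflRoot_self h0 ▸ hΦ α hα α hα

lemma smul_mem_iff (hΦ : IsReflClosed Φ) {a : ℝ} (ha : IsSign a) {α : Fin n → ℝ} (h0 : α ≠ 0) :
    a • α ∈ Φ ↔ α ∈ Φ := by
  rcases ha with rfl | rfl
  · rw [one_smul]
  · rw [neg_one_smul]
    exact ⟨fun h => neg_neg α ▸ hΦ.neg_mem h (neg_ne_zero.2 h0), fun h => hΦ.neg_mem h h0⟩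

lemma smul_E_add_smul_E_mem_iff (hΦ : IsReflClosed Φ) (hij : i ≠ j) {a : ℝ} (ha : IsSign a)
    (b : ℝ) : a • E i + b • E j ∈ Φ ↔ E i + (a * b) • E j ∈ Φ := by
  rw [smul_E_add_smul_E ha, hΦ.smul_mem_iff ha (E_add_smul_E_ne_zero hij _)]

lemma E_add_smul_E_mem_comm (hΦ : IsReflClosed Φ) (hij : i ≠ j) (hs : IsSign s)
    (h : E i + s • E j ∈ Φ) : E j + s • E i ∈ Φ := by
  have h' := (hΦ.smul_E_add_smul_E_mem_iff hij hs 1).2 (by rwa [mul_one])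
  rwa [one_smul, add_comm] at h'

lemma E_add_smul_E_mem_trans (hΦ : IsReflClosed Φ) (hij : i ≠ j) (hjk : j ≠ k) (hik : i ≠ k)
    (hs : IsSign s) (h₁ : E i + s • E j ∈ Φ) (h₂ : E j + t • E k ∈ Φ) :
    E i + (-(s * t)) • E k ∈ Φ := by
  have h := hΦ _ h₁ _ h₂
  rw [reflRoot_E_add_smul_E hs hij] at h
  rw [← hΦ.smul_mem_iff hs.neg (E_add_smul_E_ne_zero hik _)]
  convert h using 1
  simp only [Pi.add_apply, Pi.smul_apply, smul_eq_mul, E_apply_self, E_apply_of_ne hij,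
    E_apply_of_ne hjk, E_apply_of_ne hik]
  linear_combination (norm := module) hs.mul_self • (t • E k + E j)

end IsReflClosed

variable {Φ : Set (Fin n → ℝ)} {i j k p q x y : Fin n} {s : ℝ}

def Linked (Φ : Set (Fin n → ℝ)) (i j : Fin n) : Prop :=
  i = j ∨ ∃ s, IsSign s ∧ E i + s • E j ∈ Φ

lemma Linked.refl (i : Fin n) : Linked Φ i i := .inl rfl

lemma Linked.symm (hΦ : IsReflClosed Φ) (h : Linked Φ i j) : Linked Φ j i := by
  by_cases hij : i = j
  · exact .inl hij.symm
  obtain ⟨s, hs, h⟩ := h.resolve_left hij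
  exact .inr ⟨s, hs, hΦ.E_add_smul_E_mem_comm hij hs h⟩

lemma Linked.trans (hΦ : IsReflClosed Φ) (h₁ : Linked Φ i j) (h₂ : Linked Φ j k) :
    Linked Φ i k := by
  by_cases hij : i = j
  · exact hij ▸ h₂
  by_cases hjk : j = k
  · exact hjk ▸ h₁
  by_cases hik : i = k
  · exact .inl hik
  obtain ⟨s, hs, h₁⟩ := h₁.resolve_left hij
  obtain ⟨t, ht, h₂⟩ := h₂.resolve_left hjk
  exact .inr ⟨_, (hs.mul ht).neg, hΦ.E_add_smul_E_mem_trans hij hjk hik hs h₁ h₂⟩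

def IsDPair (Φ : Set (Fin n → ℝ)) (i j : Fin n) : Prop := ∀ s, IsSign s → E i + s • E j ∈ Φ

lemma IsDPair.symm (hΦ : IsReflClosed Φ) (hij : i ≠ j) (h : IsDPair Φ i j) : IsDPair Φ j i :=
  fun s hs => hΦ.E_add_smul_E_mem_comm hij hs (h s hs)

lemma IsDPair.smul_E_add_smul_E_mem (hΦ : IsReflClosed Φ) (hij : i ≠ j) (h : IsDPair Φ i j)
    {a b : ℝ} (ha : IsSign a) (hb : IsSign b) : a • E i + b • E j ∈ Φ :=
  (hΦ.smul_E_add_smul_E_mem_iff hij ha b).2 (h _ (ha.mul hb))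

lemma IsDPair.of_E_add_smul_E_mem (hΦ : IsReflClosed Φ) (hpq : IsDPair Φ p q) (hxp : x ≠ p)
    (hpq' : p ≠ q) (hxq : x ≠ q) (hs : IsSign s) (h : E x + s • E p ∈ Φ) : IsDPair Φ x q := by
  intro t ht
  have h' := hΦ.E_add_smul_E_mem_trans hxp hpq' hxq hs h (hpq _ (hs.mul ht).neg)
  rwa [mul_neg, neg_neg, ← mul_assoc, hs.mul_self, one_mul] at h'

lemma IsDPair.of_linked (hΦ : IsReflClosed Φ) (hpq : IsDPair Φ p q) (hpq' : p ≠ q)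
    (hpx : Linked Φ p x) (hxp : x ≠ p) : IsDPair Φ x p := by
  by_cases hxq : x = q
  · exact hxq ▸ hpq.symm hΦ hpq'
  obtain ⟨s, hs, h⟩ := (hpx.symm hΦ).resolve_left hxp
  exact (hpq.symm hΦ hpq').of_E_add_smul_E_mem hΦ hxq hpq'.symm hxp .one
    (by simpa using hpq.of_E_add_smul_E_mem hΦ hxp hpq' hxq hs h 1 .one)

lemma IsDPair.of_linked_of_linked (hΦ : IsReflClosed Φ) (hpq : IsDPair Φ p q) (hpq' : p ≠ q)
    (hpx : Linked Φ p x) (hpy : Linked Φ p y) (hxy : x ≠ y) : IsDPair Φ x y := by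
  by_cases hxp : x = p
  · subst hxp
    exact (hpq.of_linked hΦ hpq' hpy hxy.symm).symm hΦ hxy.symm
  by_cases hyp : y = p
  · exact hyp ▸ hpq.of_linked hΦ hpq' hpx hxp
  obtain ⟨s, hs, h⟩ := (hpy.symm hΦ).resolve_left hyp
  exact (((hpq.of_linked hΦ hpq' hpx hxp).symm hΦ hxp).of_E_add_smul_E_mem hΦ hyp
    (Ne.symm hxp) hxy.symm hs h).symm hΦ hxy.symm

open Classical in
def pairSign (Φ : Set (Fin n → ℝ)) (i j : Fin n) : ℝ := if E i + E j ∈ Φ then -1 else 1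

lemma isSign_pairSign (i j : Fin n) : IsSign (pairSign Φ i j) := by
  unfold pairSign; split_ifs
  exacts [.neg_one, .one]

lemma pairSign_mul_self (i j : Fin n) : pairSign Φ i j * pairSign Φ i j = 1 :=
  (isSign_pairSign i j).mul_self

lemma pairSign_comm (i j : Fin n) : pairSign Φ i j = pairSign Φ j i := by
  rw [pairSign, pairSign, add_comm]

lemma pairSign_self (hsub : Φ ⊆ Dset n) (i : Fin n) : pairSign Φ i i = 1 :=
  if_neg fun h => E_add_E_not_mem_Dset i (hsub h)

lemma E_sub_pairSign_mem (h : Linked Φ i j) (hij : i ≠ j) :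
    E i + (-pairSign Φ i j) • E j ∈ Φ := by
  obtain ⟨s, hs, h⟩ := h.resolve_left hij
  unfold pairSign
  split_ifs with h'
  · simpa using h'
  · rcases hs with rfl | rfl
    · exact absurd (by simpa using h) h'
    · exact h

lemma eq_neg_pairSign (hD : ¬IsDPair Φ i j) (hs : IsSign s) (h : E i + s • E j ∈ Φ) :
    s = -pairSign Φ i j := by
  unfold pairSign
  split_ifs with h'
  · rcases hs with rfl | rfl
    · norm_num
    · refine absurd (fun t ht => ?_) hD
      rcases ht with rfl | rfl
      exacts [by simpa using h', h]
  · rcases hs with rfl | rfl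
    · exact absurd (by simpa using h) h'
    · rfl

lemma pairSign_mul_pairSign (hΦ : IsReflClosed Φ) (hsub : Φ ⊆ Dset n) (hD : ¬IsDPair Φ i k)
    (hij : Linked Φ i j) (hjk : Linked Φ j k) :
    pairSign Φ i j * pairSign Φ j k = pairSign Φ i k := by
  by_cases hij' : i = j
  · rw [hij', pairSign_self hsub, one_mul]
  by_cases hjk' : j = k
  · rw [hjk', pairSign_self hsub, mul_one]
  by_cases hik' : i = k
  · rw [hik', pairSign_self hsub, pairSign_comm j k, pairSign_mul_self]
  have h := hΦ.E_add_smul_E_mem_trans hij' hjk' hik' (isSign_pairSign i j).neg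
    (E_sub_pairSign_mem hij hij') (E_sub_pairSign_mem hjk hjk')
  have := eq_neg_pairSign hD ((isSign_pairSign i j).mul (isSign_pairSign j k)).neg
    (by simpa using h)
  linarith

lemma not_isDPair_self (hsub : Φ ⊆ Dset n) (i : Fin n) : ¬IsDPair Φ i i :=
  fun h => E_add_E_not_mem_Dset i (hsub (by simpa using h 1 .one))

open Classical in
def block (Φ : Set (Fin n → ℝ)) (i : Fin n) : Finset (Fin n) := univ.filter (Linked Φ i)

lemma mem_block : j ∈ block Φ i ↔ Linked Φ i j := by
  simp [block]

lemma mem_block_self (i : Fin n) : i ∈ block Φ i := mem_block.2 (.refl i)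

lemma linked_of_mem_block (hΦ : IsReflClosed Φ) (hx : x ∈ block Φ i) (hy : y ∈ block Φ i) :
    Linked Φ x y :=
  ((mem_block.1 hx).symm hΦ).trans hΦ (mem_block.1 hy)

lemma block_eq_of_mem (hΦ : IsReflClosed Φ) (h : j ∈ block Φ i) : block Φ j = block Φ i := by
  ext k
  exact ⟨fun hk => mem_block.2 ((mem_block.1 h).trans hΦ (mem_block.1 hk)),
    fun hk => mem_block.2 (linked_of_mem_block hΦ h hk)⟩

def HasDPair (Φ : Set (Fin n → ℝ)) (B : Finset (Fin n)) : Prop :=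
  ∃ p ∈ B, ∃ q ∈ B, p ≠ q ∧ IsDPair Φ p q

lemma HasDPair.isDPair (hΦ : IsReflClosed Φ) (h : HasDPair Φ (block Φ i))
    (hx : x ∈ block Φ i) (hy : y ∈ block Φ i) (hxy : x ≠ y) : IsDPair Φ x y := by
  obtain ⟨p, hp, q, -, hpq, hD⟩ := h
  exact hD.of_linked_of_linked hΦ hpq (linked_of_mem_block hΦ hp hx)
    (linked_of_mem_block hΦ hp hy) hxy

lemma not_isDPair_of_not_hasDPair (hsub : Φ ⊆ Dset n) {B : Finset (Fin n)}
    (h : ¬HasDPair Φ B) (hx : x ∈ B) (hy : y ∈ B) : ¬IsDPair Φ x y := by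
  by_cases hxy : x = y
  · exact hxy ▸ not_isDPair_self hsub x
  · exact fun hD => h ⟨x, hx, y, hy, hxy, hD⟩

open Classical in
def blockType (Φ : Set (Fin n → ℝ)) (B : Finset (Fin n)) : RType :=
  if HasDPair Φ B then .D else .A

lemma blockType_eq_A_or_D (B : Finset (Fin n)) : blockType Φ B = .A ∨ blockType Φ B = .D := by
  unfold blockType; split_ifs
  exacts [.inr rfl, .inl rfl]

def blockRep (Φ : Set (Fin n → ℝ)) (i : Fin n) : Fin n := (block Φ i).min' ⟨i, mem_block_self i⟩

lemma blockRep_eq_of_mem (hΦ : IsReflClosed Φ) (h : j ∈ block Φ i) :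
    blockRep Φ j = blockRep Φ i := by
  simp only [blockRep, block_eq_of_mem hΦ h]

def signVector (Φ : Set (Fin n → ℝ)) (i : Fin n) : ℝ := pairSign Φ (blockRep Φ i) i

lemma isSign_signVector (i : Fin n) : IsSign (signVector Φ i) := isSign_pairSign _ _

lemma signVector_mul_signVector_mul (β : Fin n → ℝ) : signVector Φ * (signVector Φ * β) = β := by
  rw [← mul_assoc]
  convert one_mul β
  funext i
  exact (isSign_signVector i).mul_self

lemma signVector_mul_signVector (hΦ : IsReflClosed Φ) (hsub : Φ ⊆ Dset n)
    (hA : ¬HasDPair Φ (block Φ i)) (hx : x ∈ block Φ i) (hy : y ∈ block Φ i) :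
    signVector Φ x * signVector Φ y = pairSign Φ x y := by
  have hr : blockRep Φ i ∈ block Φ i := min'_mem _ _
  rw [signVector, signVector, blockRep_eq_of_mem hΦ hx, blockRep_eq_of_mem hΦ hy,
    ← pairSign_mul_pairSign hΦ hsub (not_isDPair_of_not_hasDPair hsub hA hr hy)
      (linked_of_mem_block hΦ hr hx) (linked_of_mem_block hΦ hx hy),
    ← mul_assoc, pairSign_mul_self, one_mul]

lemma signVector_mul_mem_PhiOf (hΦ : IsReflClosed Φ) (hsub : Φ ⊆ Dset n) (hxy : x ≠ y)
    {a b : ℝ} (ha : IsSign a) (hb : IsSign b) (h : a • E x + b • E y ∈ Φ) :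
    signVector Φ * (a • E x + b • E y) ∈ PhiOf (blockType Φ (block Φ x)) (block Φ x) := by
  rw [hΦ.smul_E_add_smul_E_mem_iff hxy ha] at h
  have hy : y ∈ block Φ x := mem_block.2 (.inr ⟨_, ha.mul hb, h⟩)
  have hεa := (isSign_signVector (Φ := Φ) x).mul ha
  have hεb := (isSign_signVector (Φ := Φ) y).mul hb
  rw [mul_smul_E_add_smul_E, blockType]
  split_ifs with hD
  · exact mem_PhiD_iff.2 ⟨x, mem_block_self x, y, hy, hxy, _, _, hεa, hεb, rfl⟩
  refine smul_E_add_smul_E_mem_PhiA (mem_block_self x) hy hxy hεa hεb ?_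
  have hab := eq_neg_pairSign (not_isDPair_of_not_hasDPair hsub hD (mem_block_self x) hy)
    (ha.mul hb) h
  calc signVector Φ x * a * (signVector Φ y * b)
      = signVector Φ x * signVector Φ y * (a * b) := by ring
    _ = pairSign Φ x y * -pairSign Φ x y := by
      rw [signVector_mul_signVector hΦ hsub hD (mem_block_self x) hy, hab]
    _ = -1 := by rw [mul_neg, pairSign_mul_self]

lemma signVector_mul_mem (hΦ : IsReflClosed Φ) (hsub : Φ ⊆ Dset n) {β : Fin n → ℝ}
    (hβ : β ∈ PhiOf (blockType Φ (block Φ i)) (block Φ i)) : signVector Φ * β ∈ Φ := by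
  rw [blockType] at hβ
  split_ifs at hβ with hD
  · obtain ⟨x, hx, y, hy, hxy, a, b, ha, hb, rfl⟩ := mem_PhiD_iff.1 hβ
    rw [mul_smul_E_add_smul_E]
    exact (hD.isDPair hΦ hx hy hxy).smul_E_add_smul_E_mem hΦ hxy
      ((isSign_signVector x).mul ha) ((isSign_signVector y).mul hb)
  · obtain ⟨x, hx, y, hy, hxy, rfl⟩ := hβ
    have hβ : E x - E y = (1 : ℝ) • E x + (-1 : ℝ) • E y := by module
    rw [hβ, mul_smul_E_add_smul_E, hΦ.smul_E_add_smul_E_mem_iff hxy ((isSign_signVector x).mul .one)]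
    convert E_sub_pairSign_mem (linked_of_mem_block hΦ hx hy) hxy using 3
    rw [← signVector_mul_signVector hΦ hsub hD hx hy]
    ring

end RootD

open RootD in
theorem stmt10_general (n : ℕ) (Φ : Set (Fin n → ℝ)) (hsub : Φ ⊆ Dset n)
    (hcl : ∀ α ∈ Φ, ∀ β ∈ Φ, reflRoot α β ∈ Φ) :
    ∃ (ε : Fin n → ℝ) (blk : Fin n → Finset (Fin n)) (t : Finset (Fin n) → RType),
      (∀ i, ε i = 1 ∨ ε i = -1) ∧
      (∀ i, i ∈ blk i) ∧ (∀ i j, j ∈ blk i → blk j = blk i) ∧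
      (∀ i, t (blk i) = RType.A ∨ t (blk i) = RType.D) ∧
      (fun v : Fin n → ℝ => fun j => ε j * v j) '' Φ =
        ⋃ i, PhiOf (t (blk i)) (blk i) := by
  refine ⟨signVector Φ, block Φ, blockType Φ, isSign_signVector, mem_block_self,
    fun i j h => block_eq_of_mem hcl h, fun i => blockType_eq_A_or_D _, ?_⟩
  change (signVector Φ * ·) '' Φ = _
  refine Set.Subset.antisymm ?_ (Set.iUnion_subset fun i β hβ =>
    ⟨_, signVector_mul_mem hcl hsub hβ, signVector_mul_signVector_mul β⟩)
  rintro _ ⟨α, hα, rfl⟩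
  obtain ⟨x, y, hxy, a, b, ha, hb, rfl⟩ := mem_Dset_iff.1 (hsub hα)
  exact Set.mem_iUnion.2 ⟨x, signVector_mul_mem_PhiOf hcl hsub hxy ha hb hα⟩

/-- Classification of root subsystems (Corollary 4.5). -/
theorem stmt10 (n : ℕ) (hn : 1 ≤ n) (Φ : Set (Fin n → ℝ)) (hsub : Φ ⊆ Dset n)
    (hcl : ∀ α ∈ Φ, ∀ β ∈ Φ, reflRoot α β ∈ Φ) :
    ∃ (ε : Fin n → ℝ) (blk : Fin n → Finset (Fin n)) (t : Finset (Fin n) → RType),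
      (∀ i, ε i = 1 ∨ ε i = -1) ∧
      (∀ i, i ∈ blk i) ∧ (∀ i j, j ∈ blk i → blk j = blk i) ∧
      (∀ i, t (blk i) = RType.A ∨ t (blk i) = RType.D) ∧
      (fun v : Fin n → ℝ => fun j => ε j * v j) '' Φ =
        ⋃ i, PhiOf (t (blk i)) (blk i) :=
  stmt10_general n Φ hsub hcl
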